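/- Let X be a measure space and h : X → ℝ_d measurable. The adjoint of the multiplication operator M_h f = h·f on the Hilbert module L²(X, ℝ_d) is the multiplication operator by the Clifford conjugate: (M_h)* = M_{h̄}. -/

import Mathlib

noncomputable section

open scoped BigOperators

/-- The negative-definite quadratic form on `Fin d → ℝ`, so that the Clifford
algebra generators satisfy `eᵢ² = -1` and anticommute. -/
def negQ (d : ℕ) : QuadraticForm ℝ (Fin d → ℝ) :=
  QuadraticMap.weightedSumSquares ℝ (fun _ : Fin d => (-1 : ℝ))

/-- The real Clifford algebra ℝ_d. -/
abbrev Cl (d : ℕ) : Type := CliffordAlgebra (negQ d)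

/-- The paravector `s₀ + s₁e₁ + ⋯ + s_d e_d`. -/
def pv {d : ℕ} (s₀ : ℝ) (v : Fin d → ℝ) : Cl d :=
  algebraMap ℝ (Cl d) s₀ + CliffordAlgebra.ι (negQ d) v

/-- The Clifford conjugate `s₀ - s₁e₁ - ⋯ - s_d e_d` of a paravector. -/
def pvConj {d : ℕ} (s₀ : ℝ) (v : Fin d → ℝ) : Cl d :=
  algebraMap ℝ (Cl d) s₀ - CliffordAlgebra.ι (negQ d) v

/-- The squared modulus `s₀² + s₁² + ⋯ + s_d²` of a paravector. -/
def pvNormSq {d : ℕ} (s₀ : ℝ) (v : Fin d → ℝ) : ℝ := s₀ ^ 2 + ∑ i, v i ^ 2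

/-- Clifford conjugation on ℝ_d (composite of involution and reversal). -/
def clConj {d : ℕ} (a : Cl d) : Cl d :=
  CliffordAlgebra.reverse (CliffordAlgebra.involute a)

open MeasureTheory

/-! Test the adjoint identity against `f = 1_t`, for sets `t` of finite measure on which `h` is
bounded: then `h f` is square-integrable, and the identity says `∫_t conj u = ∫_t conj g · h`.
On each truncation `{‖h‖ ≤ n}` both `conj u` and `conj g · h` are square-integrable, so agreeing
on all such `t` forces them to agree a.e. there, and these truncations exhaust `X`. Conversely
`u = conj h · g` satisfies the identity pointwise, because conjugation reverses products. -/

open Set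

theorem ae_eq_of_forall_setIntegral_eq_of_iUnion_eq_univ {X E : Type*} [MeasurableSpace X]
    {μ : Measure X} [NormedAddCommGroup E] [NormedSpace ℝ E] [CompleteSpace E]
    {F G : X → E} {p : ENNReal} (hp : 1 ≤ p) (hp_top : p ≠ ⊤) {S : ℕ → Set X}
    (hSm : ∀ n, MeasurableSet (S n)) (hS : ⋃ n, S n = univ)
    (hF : ∀ n, MemLp F p (μ.restrict (S n))) (hG : ∀ n, MemLp G p (μ.restrict (S n)))
    (hFG : ∀ n t, MeasurableSet t → t ⊆ S n → μ t < ⊤ →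
      ∫ x in t, F x ∂μ = ∫ x in t, G x ∂μ) :
    F =ᵐ[μ] G := by
  have hp0 : p ≠ 0 := (zero_lt_one.trans_le hp).ne'
  have integrableOn {H : X → E} (hH : ∀ n, MemLp H p (μ.restrict (S n))) (n : ℕ) (s : Set X)
      (hs : (μ.restrict (S n)) s < ⊤) : IntegrableOn H s (μ.restrict (S n)) :=
    haveI : IsFiniteMeasure ((μ.restrict (S n)).restrict s) := ⟨by simpa using hs⟩
    ((hH n).restrict s).integrable hp
  rw [← Measure.restrict_univ (μ := μ), ← hS, Filter.EventuallyEq, ae_restrict_iUnion_iff]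
  intro n
  refine AEFinStronglyMeasurable.ae_eq_of_forall_setIntegral_eq
    (fun s _ hs => integrableOn hF n s hs) (fun s _ hs => integrableOn hG n s hs)
    (fun s hs hμs => ?_) ((hF n).aefinStronglyMeasurable hp0 hp_top)
    ((hG n).aefinStronglyMeasurable hp0 hp_top)
  rw [Measure.restrict_apply hs] at hμs
  rw [Measure.restrict_restrict hs]
  exact hFG n _ (hs.inter (hSm n)) inter_subset_right hμs

section Transport

variable {X A E : Type*} [Ring A] [Algebra ℝ A] [NormedAddCommGroup E] [NormedSpace ℝ E]
  (ℓ : A ≃ₗ[ℝ] E)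

theorem map_mul_indicator_one (a : X → A) (t : Set X) :
    (fun x => ℓ (a x * t.indicator 1 x)) = t.indicator fun x => ℓ (a x) := by
  funext x
  by_cases hx : x ∈ t <;> simp [hx]

theorem setIntegral_eq_of_forall_integral_mul_eq [MeasurableSpace X] {μ : Measure X}
    {h k v : X → A}
    (H : ∀ f : X → A, MemLp (fun x => ℓ (f x)) 2 μ → MemLp (fun x => ℓ (h x * f x)) 2 μ →
      ∫ x, ℓ (v x * f x) ∂μ = ∫ x, ℓ (k x * (h x * f x)) ∂μ)
    (hh : AEStronglyMeasurable (fun x => ℓ (h x)) μ)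
    {t : Set X} (ht : MeasurableSet t) (hμt : μ t < ⊤) (C : ℝ)
    (hC : ∀ᵐ x ∂μ.restrict t, ‖ℓ (h x)‖ ≤ C) :
    ∫ x in t, ℓ (v x) ∂μ = ∫ x in t, ℓ (k x * h x) ∂μ := by
  have h_indicator : MemLp (fun x => ℓ (t.indicator 1 x)) 2 μ := by
    have : (fun x => ℓ (t.indicator 1 x)) = t.indicator fun _ => ℓ 1 := by
      simpa using map_mul_indicator_one ℓ (fun _ => (1 : A)) t
    rw [this]
    exact memLp_indicator_const 2 ht (ℓ 1) (Or.inr hμt.ne)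
  have h_mul_indicator : MemLp (fun x => ℓ (h x * t.indicator 1 x)) 2 μ := by
    rw [map_mul_indicator_one, memLp_indicator_iff_restrict ht]
    have : IsFiniteMeasure (μ.restrict t) := ⟨by simpa using hμt⟩
    exact MemLp.of_bound hh.restrict C hC
  have := H _ h_indicator h_mul_indicator
  simp_rw [← mul_assoc, map_mul_indicator_one, integral_indicator ht] at this
  exact this

variable [FiniteDimensional ℝ E]

def transportedMul : E →L[ℝ] E →L[ℝ] E :=
  LinearMap.toContinuousLinearMap <|
    LinearMap.toContinuousLinearMap.toLinearMap ∘ₗ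
      ((LinearMap.mul ℝ A).compl₁₂ ℓ.symm.toLinearMap ℓ.symm.toLinearMap).compr₂ ℓ.toLinearMap

@[simp]
theorem transportedMul_apply_apply (a b : A) : transportedMul ℓ (ℓ a) (ℓ b) = ℓ (a * b) := by
  simp [transportedMul]

variable [MeasurableSpace X] {μ : Measure X}

theorem MeasureTheory.MemLp.map_linearMap {p : ENNReal} {u : X → A} (T : A →ₗ[ℝ] A)
    (hu : MemLp (fun x => ℓ (u x)) p μ) : MemLp (fun x => ℓ (T (u x))) p μ := by
  have := (LinearMap.toContinuousLinearMap
    (ℓ.toLinearMap ∘ₗ T ∘ₗ ℓ.symm.toLinearMap)).comp_memLp' hu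
  simpa [Function.comp_def] using this

theorem MeasureTheory.MemLp.map_mul_of_bound {p : ENNReal} {u w : X → A}
    (hu : MemLp (fun x => ℓ (u x)) p μ)
    (hw : AEStronglyMeasurable (fun x => ℓ (w x)) μ) (C : ℝ) (hC : ∀ᵐ x ∂μ, ‖ℓ (w x)‖ ≤ C) :
    MemLp (fun x => ℓ (u x * w x)) p μ := by
  simpa using (transportedMul ℓ).memLp_of_bilin p hu (memLp_top_of_bound hw C hC)

theorem ae_eq_mul_of_forall_integral_mul_eq {h k v : X → A}
    (H : ∀ f : X → A, MemLp (fun x => ℓ (f x)) 2 μ → MemLp (fun x => ℓ (h x * f x)) 2 μ →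
      ∫ x, ℓ (v x * f x) ∂μ = ∫ x, ℓ (k x * (h x * f x)) ∂μ)
    (hh : AEStronglyMeasurable (fun x => ℓ (h x)) μ)
    (hk : MemLp (fun x => ℓ (k x)) 2 μ) (hv : MemLp (fun x => ℓ (v x)) 2 μ) :
    v =ᵐ[μ] fun x => k x * h x := by
  have := FiniteDimensional.complete ℝ E
  set S : ℕ → Set X := fun n => {x | ‖hh.mk _ x‖ ≤ n}
  have hSm (n : ℕ) : MeasurableSet (S n) :=
    measurableSet_le hh.stronglyMeasurable_mk.norm.measurable measurable_const
  have hS : ⋃ n, S n = univ :=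
    eq_univ_of_forall fun x => mem_iUnion.2 (exists_nat_ge ‖hh.mk _ x‖)
  have h_bound (n : ℕ) : ∀ᵐ x ∂μ.restrict (S n), ‖ℓ (h x)‖ ≤ n := by
    filter_upwards [ae_restrict_mem (hSm n), ae_restrict_of_ae hh.ae_eq_mk] with x hx hxmk
    rwa [hxmk]
  have := ae_eq_of_forall_setIntegral_eq_of_iUnion_eq_univ one_le_two ENNReal.ofNat_ne_top hSm hS
    (fun n => hv.restrict (S n))
    (fun n => (hk.restrict (S n)).map_mul_of_bound ℓ hh.restrict n (h_bound n))
    (fun n t ht htS hμt => setIntegral_eq_of_forall_integral_mul_eq ℓ H hh ht hμt n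
      (ae_restrict_of_ae_restrict_of_subset htS (h_bound n)))
  exact this.mono fun x hx => ℓ.injective hx

end Transport

theorem clConj_mul {d : ℕ} (a b : Cl d) : clConj (a * b) = clConj b * clConj a := by
  rw [clConj, clConj, clConj, map_mul, CliffordAlgebra.reverse.map_mul]

theorem clConj_clConj {d : ℕ} (a : Cl d) : clConj (clConj a) = a := by
  rw [clConj, clConj, CliffordAlgebra.reverse_involute, CliffordAlgebra.reverse_reverse,
    CliffordAlgebra.involute_involute]

def clConjLinear (d : ℕ) : Cl d →ₗ[ℝ] Cl d :=
  CliffordAlgebra.reverse.comp (CliffordAlgebra.involute (Q := negQ d)).toLinearMap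

theorem adjoint_of_multiplication_operator {d : ℕ}
    {X : Type*} [MeasurableSpace X] (μ : Measure X)
    (ℓ : Cl d ≃ₗ[ℝ] EuclideanSpace ℝ (Fin (2 ^ d)))
    (h : X → Cl d) (hmeas : AEStronglyMeasurable (fun x => ℓ (h x)) μ)
    (g : X → Cl d) (hg : MemLp (fun x => ℓ (g x)) 2 μ) :
    -- domain characterization: `g ∈ dom((M_h)*) ↔ conj(h)·g ∈ L²`:
    ((∃ u : X → Cl d, MemLp (fun x => ℓ (u x)) 2 μ ∧
        ∀ f : X → Cl d, MemLp (fun x => ℓ (f x)) 2 μ →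
          MemLp (fun x => ℓ (h x * f x)) 2 μ →
          ∫ x, ℓ (clConj (u x) * f x) ∂μ = ∫ x, ℓ (clConj (g x) * (h x * f x)) ∂μ) ↔
      MemLp (fun x => ℓ (clConj (h x) * g x)) 2 μ) ∧
    -- action: any adjoint vector `u = (M_h)* g` equals `conj(h)·g` a.e.:
    (∀ u : X → Cl d, MemLp (fun x => ℓ (u x)) 2 μ →
      (∀ f : X → Cl d, MemLp (fun x => ℓ (f x)) 2 μ →
        MemLp (fun x => ℓ (h x * f x)) 2 μ →
        ∫ x, ℓ (clConj (u x) * f x) ∂μ = ∫ x, ℓ (clConj (g x) * (h x * f x)) ∂μ) →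
      u =ᵐ[μ] fun x => clConj (h x) * g x) := by
  have action (u : X → Cl d) (hu : MemLp (fun x => ℓ (u x)) 2 μ)
      (Hu : ∀ f : X → Cl d, MemLp (fun x => ℓ (f x)) 2 μ → MemLp (fun x => ℓ (h x * f x)) 2 μ →
        ∫ x, ℓ (clConj (u x) * f x) ∂μ = ∫ x, ℓ (clConj (g x) * (h x * f x)) ∂μ) :
      u =ᵐ[μ] fun x => clConj (h x) * g x := by
    filter_upwards [ae_eq_mul_of_forall_integral_mul_eq ℓ Hu hmeas
      (hg.map_linearMap ℓ (clConjLinear d)) (hu.map_linearMap ℓ (clConjLinear d))] with x hx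
    rw [← clConj_clConj (u x), hx, clConj_mul, clConj_clConj]
  refine ⟨⟨fun ⟨u, hu, Hu⟩ => hu.ae_eq ((action u hu Hu).fun_comp ℓ), fun hmem => ?_⟩, action⟩
  refine ⟨fun x => clConj (h x) * g x, hmem, fun f _ _ => ?_⟩
  simp_rw [clConj_mul, clConj_clConj, mul_assoc]
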